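/- arXiv:2002.02321 — 9 statements merged into one kernel-verified Lean document; each statement's English description precedes it below -/
import Mathlib

section
/- Let G1 and G2 be finite directed graphs such that there exists a bijective graph morphism from G2 onto G1 and a bijective graph morphism from G1 onto G2. Then G1 and G2 are isomorphic as graphs. -/
theorem stmt2 {V₁ V₂ : Type*} [Finite V₁] [Finite V₂]
    (G₁ : V₁ → V₁ → Prop) (G₂ : V₂ → V₂ → Prop)
    (φ : V₂ → V₁) (hφ : Function.Bijective φ)
    (hφm : ∀ x y, G₂ x y → G₁ (φ x) (φ y))
    (ψ : V₁ → V₂) (hψ : Function.Bijective ψ)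
    (hψm : ∀ x y, G₁ x y → G₂ (ψ x) (ψ y)) :
    ∃ e : V₁ ≃ V₂, ∀ x y, G₁ x y ↔ G₂ (e x) (e y) := by
  classical
  set α : V₁ → V₁ := φ ∘ ψ with hα
  have hαinj : Function.Injective α := hφ.1.comp hψ.1
  have hαm : ∀ x y, G₁ x y → G₁ (α x) (α y) := fun x y h => hφm _ _ (hψm _ _ h)
  -- edge set
  let E := {p : V₁ × V₁ // G₁ p.1 p.2}
  have : Finite E := Subtype.finite
  let F : E → E := fun p => ⟨(α p.1.1, α p.1.2), hαm _ _ p.2⟩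
  have hFinj : Function.Injective F := by
    rintro ⟨⟨a, b⟩, h⟩ ⟨⟨c, d⟩, h'⟩ heq
    have h2 := Prod.ext_iff.mp (Subtype.ext_iff.mp heq)
    exact Subtype.ext (Prod.ext (hαinj h2.1) (hαinj h2.2))
  have hFsurj : Function.Surjective F := Finite.surjective_of_injective hFinj
  have hαrefl : ∀ x y, G₁ (α x) (α y) → G₁ x y := by
    intro x y h
    obtain ⟨⟨⟨u, v⟩, huv⟩, hF⟩ := hFsurj ⟨(α x, α y), h⟩
    have h2 := Prod.ext_iff.mp (Subtype.ext_iff.mp hF)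
    rw [← hαinj h2.1, ← hαinj h2.2]
    exact huv
  refine ⟨Equiv.ofBijective ψ hψ, fun x y => ⟨hψm x y, fun h => ?_⟩⟩
  exact hαrefl x y (hφm _ _ h)
end

section
/- Let X be a set with two ternary relations R₁, R₂ : X → X → X → Prop, and let Q be a complete lattice with two binary operations •₁, •₂ that distribute over arbitrary suprema in both arguments. Define convolutions on Q^X by (f ∗₁ g) x = ⨆ {f y •₁ g z | R₁ x y z} and (f ∗₂ g) x = ⨆ {f y •₂ g z | R₂ x y z}. If the relational interchange law (∃ y z, R₂ y t u ∧ R₁ x y z ∧ R₂ z v w) → (∃ y z, R₁ y t v ∧ R₂ x y z ∧ R₁ z u w) holds in X, and the algebraic interchange law (a •₂ b) •₁ (c •₂ d) ≤ (a •₁ c) •₂ (b •₁ d) holds in Q, then (f ∗₂ g) ∗₁ (h ∗₂ k) ≤ (f ∗₁ h) ∗₂ (g ∗₁ k) holds for all f, g, h, k in Q^X with the pointwise order. -/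
/-- Relational convolution of `f` and `g` along the ternary relation `R`,
with composition `o` on the weight lattice. -/
def conv {X Q : Type*} [CompleteLattice Q] (R : X → X → X → Prop)
    (o : Q → Q → Q) (f g : X → Q) : X → Q :=
  fun x => ⨆ y, ⨆ z, ⨆ _ : R x y z, o (f y) (g z)

private theorem supDistL {Q : Type*} [CompleteLattice Q] (o : Q → Q → Q)
    (hl : ∀ (s : Set Q) (b : Q), o (sSup s) b = ⨆ a ∈ s, o a b)
    {ι : Sort*} (f : ι → Q) (b : Q) : o (⨆ i, f i) b = ⨆ i, o (f i) b := by
  rw [iSup, hl, iSup_range]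

private theorem supDistR {Q : Type*} [CompleteLattice Q] (o : Q → Q → Q)
    (hr : ∀ (a : Q) (s : Set Q), o a (sSup s) = ⨆ b ∈ s, o a b)
    {ι : Sort*} (a : Q) (f : ι → Q) : o a (⨆ i, f i) = ⨆ i, o a (f i) := by
  rw [iSup, hr, iSup_range]

private theorem monoL {Q : Type*} [CompleteLattice Q] (o : Q → Q → Q)
    (hl : ∀ (s : Set Q) (b : Q), o (sSup s) b = ⨆ a ∈ s, o a b)
    {a a' : Q} (b : Q) (hab : a ≤ a') : o a b ≤ o a' b := by
  have h := hl {a, a'} b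
  rw [sSup_pair, sup_eq_right.mpr hab] at h
  rw [h]
  exact le_iSup_of_le _ (le_iSup_of_le (Set.mem_insert _ _) le_rfl)

private theorem monoR {Q : Type*} [CompleteLattice Q] (o : Q → Q → Q)
    (hr : ∀ (a : Q) (s : Set Q), o a (sSup s) = ⨆ b ∈ s, o a b)
    (a : Q) {b b' : Q} (hbb : b ≤ b') : o a b ≤ o a b' := by
  have h := hr a {b, b'}
  rw [sSup_pair, sup_eq_right.mpr hbb] at h
  rw [h]
  exact le_iSup_of_le _ (le_iSup_of_le (Set.mem_insert _ _) le_rfl)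

theorem stmt8 {X Q : Type*} [CompleteLattice Q] (R₁ R₂ : X → X → X → Prop)
    (o₁ o₂ : Q → Q → Q)
    (h₁l : ∀ (s : Set Q) (b : Q), o₁ (sSup s) b = ⨆ a ∈ s, o₁ a b)
    (h₁r : ∀ (a : Q) (s : Set Q), o₁ a (sSup s) = ⨆ b ∈ s, o₁ a b)
    (h₂l : ∀ (s : Set Q) (b : Q), o₂ (sSup s) b = ⨆ a ∈ s, o₂ a b)
    (h₂r : ∀ (a : Q) (s : Set Q), o₂ a (sSup s) = ⨆ b ∈ s, o₂ a b)
    (hri : ∀ t u v w x, (∃ y z, R₂ y t u ∧ R₁ x y z ∧ R₂ z v w) →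
      (∃ y z, R₁ y t v ∧ R₂ x y z ∧ R₁ z u w))
    (hi : ∀ a b c d, o₁ (o₂ a b) (o₂ c d) ≤ o₂ (o₁ a c) (o₁ b d)) :
    ∀ f g h k : X → Q,
      conv R₁ o₁ (conv R₂ o₂ f g) (conv R₂ o₂ h k) ≤
        conv R₂ o₂ (conv R₁ o₁ f h) (conv R₁ o₁ g k) := by
  intro f g h k x
  simp only [conv, supDistL o₁ h₁l, supDistR o₁ h₁r]
  refine iSup_le fun y => iSup_le fun z => iSup_le fun hyz => iSup_le fun t =>
    iSup_le fun u => iSup_le fun htu => iSup_le fun v => iSup_le fun w => iSup_le fun hvw => ?_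
  obtain ⟨y', z', h1, h2, h3⟩ := hri t u v w x ⟨y, z, htu, hyz, hvw⟩
  calc o₁ (o₂ (f t) (g u)) (o₂ (h v) (k w))
      ≤ o₂ (o₁ (f t) (h v)) (o₁ (g u) (k w)) := hi _ _ _ _
    _ ≤ o₂ (conv R₁ o₁ f h y') (conv R₁ o₁ g k z') := by
        refine le_trans (monoL o₂ h₂l _ ?_) (monoR o₂ h₂r _ ?_)
        · exact le_iSup_of_le t (le_iSup_of_le v (le_iSup_of_le h1 le_rfl))
        · exact le_iSup_of_le u (le_iSup_of_le w (le_iSup_of_le h3 le_rfl))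
    _ ≤ conv R₂ o₂ (conv R₁ o₁ f h) (conv R₁ o₁ g k) x :=
        le_iSup_of_le y' (le_iSup_of_le z' (le_iSup_of_le h2 le_rfl))
end

section
/- Let X be a set with two ternary relations R₁, R₂ and Q a bi-prequantale such that there exist a, b, c, d ∈ Q with (a •₂ b) •₁ (c •₂ d) ≠ 0. If the algebraic interchange law (f ∗₂ g) ∗₁ (h ∗₂ k) ≤ (f ∗₁ h) ∗₂ (g ∗₁ k) holds for all functions in Q^X, then the relational interchange law holds in X: (∃ y z, R₂ y t u ∧ R₁ x y z ∧ R₂ z v w) → (∃ y z, R₁ y t v ∧ R₂ x y z ∧ R₁ z u w). -/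
theorem stmt10 {X Q : Type*} [CompleteLattice Q] (R₁ R₂ : X → X → X → Prop)
    (o₁ o₂ : Q → Q → Q)
    (h₁l : ∀ (s : Set Q) (b : Q), o₁ (sSup s) b = ⨆ a ∈ s, o₁ a b)
    (h₁r : ∀ (a : Q) (s : Set Q), o₁ a (sSup s) = ⨆ b ∈ s, o₁ a b)
    (h₂l : ∀ (s : Set Q) (b : Q), o₂ (sSup s) b = ⨆ a ∈ s, o₂ a b)
    (h₂r : ∀ (a : Q) (s : Set Q), o₂ a (sSup s) = ⨆ b ∈ s, o₂ a b)
    (hnd : ∃ a b c d : Q, o₁ (o₂ a b) (o₂ c d) ≠ ⊥)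
    (hi : ∀ f g h k : X → Q,
      conv R₁ o₁ (conv R₂ o₂ f g) (conv R₂ o₂ h k) ≤
        conv R₂ o₂ (conv R₁ o₁ f h) (conv R₁ o₁ g k)) :
    ∀ t u v w x, (∃ y z, R₂ y t u ∧ R₁ x y z ∧ R₂ z v w) →
      (∃ y z, R₁ y t v ∧ R₂ x y z ∧ R₁ z u w) := by
  classical
  obtain ⟨a, b, c, d, hne⟩ := hnd
  -- bottom absorption
  have o1bl : ∀ q : Q, o₁ ⊥ q = ⊥ := fun q => by simpa using h₁l ∅ q
  have o1br : ∀ q : Q, o₁ q ⊥ = ⊥ := fun q => by simpa using h₁r q ∅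
  have o2bl : ∀ q : Q, o₂ ⊥ q = ⊥ := fun q => by simpa using h₂l ∅ q
  have o2br : ∀ q : Q, o₂ q ⊥ = ⊥ := fun q => by simpa using h₂r q ∅
  -- monotonicity
  have m1l : ∀ p p' q : Q, p ≤ p' → o₁ p q ≤ o₁ p' q := by
    intro p p' q hpp
    have := h₁l {p, p'} q
    simp only [sSup_insert, csSup_singleton, iSup_insert, iSup_singleton] at this
    rw [sup_eq_right.mpr hpp] at this
    rw [this]; exact le_sup_left
  have m1r : ∀ p q q' : Q, q ≤ q' → o₁ p q ≤ o₁ p q' := by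
    intro p q q' hqq
    have := h₁r p {q, q'}
    simp only [sSup_insert, csSup_singleton, iSup_insert, iSup_singleton] at this
    rw [sup_eq_right.mpr hqq] at this
    rw [this]; exact le_sup_left
  intro t u v w x ⟨y, z, h2y, h1x, h2z⟩
  by_contra hcon
  push_neg at hcon
  set f : X → Q := fun p => if p = t then a else ⊥ with hf
  set g : X → Q := fun p => if p = u then b else ⊥ with hg
  set h : X → Q := fun p => if p = v then c else ⊥ with hh
  set k : X → Q := fun p => if p = w then d else ⊥ with hk
  have hfg : o₂ a b ≤ conv R₂ o₂ f g y := by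
    refine le_iSup_of_le t (le_iSup_of_le u (le_iSup_of_le h2y ?_))
    simp [hf, hg]
  have hhk : o₂ c d ≤ conv R₂ o₂ h k z := by
    refine le_iSup_of_le v (le_iSup_of_le w (le_iSup_of_le h2z ?_))
    simp [hh, hk]
  have hL : o₁ (o₂ a b) (o₂ c d) ≤
      conv R₁ o₁ (conv R₂ o₂ f g) (conv R₂ o₂ h k) x := by
    refine le_iSup_of_le y (le_iSup_of_le z (le_iSup_of_le h1x ?_))
    exact le_trans (m1l _ _ _ hfg) (m1r _ _ _ hhk)
  -- RHS is bottom
  have hR : conv R₂ o₂ (conv R₁ o₁ f h) (conv R₁ o₁ g k) x ≤ ⊥ := by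
    refine iSup_le fun y' => iSup_le fun z' => iSup_le fun hr => ?_
    rcases Classical.em (R₁ y' t v) with h1 | h1
    · have h2 : ¬ R₁ z' u w := fun h2 => (hcon y' z' h1 hr h2).elim
      have : conv R₁ o₁ g k z' = ⊥ := by
        refine le_bot_iff.mp (iSup_le fun p => iSup_le fun q => iSup_le fun hr' => ?_)
        by_cases hp : p = u
        · by_cases hq : q = w
          · subst hp; subst hq; exact (h2 hr').elim
          · simp [hk, hq, o1br]
        · simp [hg, hp, o1bl]
      rw [this, o2br]
    · have : conv R₁ o₁ f h y' = ⊥ := by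
        refine le_bot_iff.mp (iSup_le fun p => iSup_le fun q => iSup_le fun hr' => ?_)
        by_cases hp : p = t
        · by_cases hq : q = v
          · subst hp; subst hq; exact (h1 hr').elim
          · simp [hh, hq, o1br]
        · simp [hf, hp, o1bl]
      rw [this, o2bl]
  exact hne (le_bot_iff.mp (hL.trans ((hi f g h k x).trans hR)))
end

section
/- Let X be a set with two ternary relations R₁, R₂ such that there exist x, y, z, t, u, v, w ∈ X with R₂ y t u ∧ R₁ x y z ∧ R₂ z v w, and Q a bi-prequantale. If the convolution interchange law (f ∗₂ g) ∗₁ (h ∗₂ k) ≤ (f ∗₁ h) ∗₂ (g ∗₁ k) holds in Q^X, then (a •₂ b) •₁ (c •₂ d) ≤ (a •₁ c) •₂ (b •₁ d) holds for all a, b, c, d in Q. -/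
theorem stmt11 {X Q : Type*} [CompleteLattice Q] (R₁ R₂ : X → X → X → Prop)
    (o₁ o₂ : Q → Q → Q)
    (h₁l : ∀ (s : Set Q) (b : Q), o₁ (sSup s) b = ⨆ a ∈ s, o₁ a b)
    (h₁r : ∀ (a : Q) (s : Set Q), o₁ a (sSup s) = ⨆ b ∈ s, o₁ a b)
    (h₂l : ∀ (s : Set Q) (b : Q), o₂ (sSup s) b = ⨆ a ∈ s, o₂ a b)
    (h₂r : ∀ (a : Q) (s : Set Q), o₂ a (sSup s) = ⨆ b ∈ s, o₂ a b)
    (hnd : ∃ x y z t u v w : X, R₂ y t u ∧ R₁ x y z ∧ R₂ z v w)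
    (hi : ∀ f g h k : X → Q,
      conv R₁ o₁ (conv R₂ o₂ f g) (conv R₂ o₂ h k) ≤
        conv R₂ o₂ (conv R₁ o₁ f h) (conv R₁ o₁ g k)) :
    ∀ a b c d : Q, o₁ (o₂ a b) (o₂ c d) ≤ o₂ (o₁ a c) (o₁ b d) := by
  have monol : ∀ (o : Q → Q → Q),
      (∀ (s : Set Q) (b : Q), o (sSup s) b = ⨆ a ∈ s, o a b) →
      ∀ a a' b : Q, a ≤ a' → o a b ≤ o a' b := by
    intro o ho a a' b hle
    have : a' = sSup {a, a'} := by
      rw [sSup_pair]; exact (sup_eq_right.mpr hle).symm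
    rw [this, ho]
    exact le_biSup (f := fun x => o x b) (Set.mem_insert _ _)
  have monor : ∀ (o : Q → Q → Q),
      (∀ (a : Q) (s : Set Q), o a (sSup s) = ⨆ b ∈ s, o a b) →
      ∀ a b b' : Q, b ≤ b' → o a b ≤ o a b' := by
    intro o ho a b b' hle
    have : b' = sSup {b, b'} := by
      rw [sSup_pair]; exact (sup_eq_right.mpr hle).symm
    rw [this, ho]
    exact le_biSup (f := fun y => o a y) (Set.mem_insert _ _)
  intro a b c d
  obtain ⟨x, y, z, t, u, v, w, hyu, hxyz, hzw⟩ := hnd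
  have key := hi (fun _ => a) (fun _ => b) (fun _ => c) (fun _ => d) x
  refine le_trans ?_ (le_trans key ?_)
  · -- LHS bound
    calc o₁ (o₂ a b) (o₂ c d)
        ≤ o₁ (conv R₂ o₂ (fun _ => a) (fun _ => b) y)
            (conv R₂ o₂ (fun _ => c) (fun _ => d) z) := by
          refine le_trans (monol o₁ h₁l _ _ _ ?_) (monor o₁ h₁r _ _ _ ?_)
          · exact le_iSup_of_le t (le_iSup_of_le u (le_iSup_of_le hyu le_rfl))
          · exact le_iSup_of_le v (le_iSup_of_le w (le_iSup_of_le hzw le_rfl))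
      _ ≤ conv R₁ o₁ (conv R₂ o₂ (fun _ => a) (fun _ => b))
            (conv R₂ o₂ (fun _ => c) (fun _ => d)) x :=
          le_iSup_of_le y (le_iSup_of_le z (le_iSup_of_le hxyz le_rfl))
  · -- RHS bound
    refine iSup_le fun y' => iSup_le fun z' => iSup_le fun _ => ?_
    refine le_trans (monol o₂ h₂l _ _ _ ?_) (monor o₂ h₂r _ _ _ ?_)
    · exact iSup_le fun _ => iSup_le fun _ => iSup_le fun _ => le_rfl
    · exact iSup_le fun _ => iSup_le fun _ => iSup_le fun _ => le_rfl
end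

section
/- Let X be a set with ternary relation R having a set E ⊆ X of relational units (for each x there exists e ∈ E with R x e x, R x y e ∧ e ∈ E implies x = y, and symmetrically on the left), and let Q be a prequantale with unit 1 for •. Define id_E : X → Q by id_E x = 1 if x ∈ E and 0 otherwise. Then id_E is a two-sided unit for convolution: f ∗ id_E = f = id_E ∗ f for all f : X → Q. -/
open scoped Classical in
/-- The indicator function of `E`, with value the unit `e` on `E` and `⊥` elsewhere. -/
noncomputable def idE {X Q : Type*} [CompleteLattice Q] (E : Set X) (e : Q) : X → Q :=
  fun x => if x ∈ E then e else ⊥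

theorem stmt12 {X Q : Type*} [CompleteLattice Q] (R : X → X → X → Prop) (E : Set X)
    (o : Q → Q → Q) (e : Q)
    (hl : ∀ (s : Set Q) (b : Q), o (sSup s) b = ⨆ a ∈ s, o a b)
    (hr : ∀ (a : Q) (s : Set Q), o a (sSup s) = ⨆ b ∈ s, o a b)
    (hel : ∀ a, o e a = a) (her : ∀ a, o a e = a)
    (hu1 : ∀ x, ∃ u ∈ E, R x u x)
    (hu2 : ∀ x y, (∃ u ∈ E, R x u y) → x = y)
    (hu3 : ∀ x, ∃ u ∈ E, R x x u)
    (hu4 : ∀ x y, (∃ u ∈ E, R x y u) → x = y) :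
    ∀ f : X → Q, conv R o f (idE E e) = f ∧ conv R o (idE E e) f = f := by
  have hbotr : ∀ a : Q, o a ⊥ = ⊥ := by
    intro a
    have := hr a ∅
    simpa using this
  have hbotl : ∀ a : Q, o ⊥ a = ⊥ := by
    intro a
    have := hl ∅ a
    simpa using this
  intro f
  constructor
  · funext x
    apply le_antisymm
    · refine iSup_le fun y => iSup_le fun z => iSup_le fun hR => ?_
      by_cases hz : z ∈ E
      · have hxy : x = y := hu4 x y ⟨z, hz, hR⟩
        simp [idE, hz, her, hxy]
      · simp [idE, hz, hbotr]
    · obtain ⟨u, hu, hRu⟩ := hu3 x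
      calc f x = o (f x) (idE E e u) := by simp [idE, hu, her]
        _ ≤ ⨆ z, ⨆ _ : R x x z, o (f x) (idE E e z) := by
            exact le_trans (le_iSup (fun _ : R x x u => o (f x) (idE E e u)) hRu)
              (le_iSup (fun z => ⨆ _ : R x x z, o (f x) (idE E e z)) u)
        _ ≤ _ := le_iSup (fun y => ⨆ z, ⨆ _ : R x y z, o (f y) (idE E e z)) x
  · funext x
    apply le_antisymm
    · refine iSup_le fun y => iSup_le fun z => iSup_le fun hR => ?_
      by_cases hy : y ∈ E
      · have hxz : x = z := hu2 x z ⟨y, hy, hR⟩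
        simp [idE, hy, hel, hxz]
      · simp [idE, hy, hbotl]
    · obtain ⟨u, hu, hRu⟩ := hu1 x
      calc f x = o (idE E e u) (f x) := by simp [idE, hu, hel]
        _ ≤ ⨆ z, ⨆ _ : R x u z, o (idE E e u) (f z) := by
            exact le_trans (le_iSup (fun _ : R x u x => o (idE E e u) (f x)) hRu)
              (le_iSup (fun z => ⨆ _ : R x u z, o (idE E e u) (f z)) x)
        _ ≤ _ := le_iSup (fun y => ⨆ z, ⨆ _ : R x y z, o (idE E e y) (f z)) u
end

section
/- Let X be a set with ternary relation R and Q a unital prequantale with 1 ≠ 0. If the function id_E (equal to 1 on E and 0 elsewhere) is a two-sided unit for convolution in Q^X, then E is a set of relational units for R: for all x there exists e ∈ E with R x x e and R x e x, and R x y e with e ∈ E implies x = y (and symmetrically). -/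
theorem stmt13 {X Q : Type*} [CompleteLattice Q] (R : X → X → X → Prop) (E : Set X)
    (o : Q → Q → Q) (e : Q)
    (hl : ∀ (s : Set Q) (b : Q), o (sSup s) b = ⨆ a ∈ s, o a b)
    (hr : ∀ (a : Q) (s : Set Q), o a (sSup s) = ⨆ b ∈ s, o a b)
    (hel : ∀ a, o e a = a) (her : ∀ a, o a e = a)
    (hne : e ≠ ⊥)
    (hunit : ∀ f : X → Q, conv R o f (idE E e) = f ∧ conv R o (idE E e) f = f) :
    (∀ x, ∃ u ∈ E, R x u x) ∧
    (∀ x y, (∃ u ∈ E, R x u y) → x = y) ∧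
    (∀ x, ∃ u ∈ E, R x x u) ∧
    (∀ x y, (∃ u ∈ E, R x y u) → x = y) := by
  classical
  have obotl : ∀ b, o ⊥ b = ⊥ := by
    intro b; simpa using hl ∅ b
  have obotr : ∀ a, o a ⊥ = ⊥ := by
    intro a; simpa using hr a ∅
  refine ⟨?_, ?_, ?_, ?_⟩
  · intro x
    have h := congrFun (hunit (idE ({x} : Set X) e)).2 x
    have hx : conv R o (idE E e) (idE ({x} : Set X) e) x = e := by
      rw [h]; simp [idE]
    by_contra hcon
    push_neg at hcon
    apply hne
    rw [← hx]
    unfold conv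
    simp only [iSup_eq_bot]
    intro y z hR
    by_cases hz : z = x
    · subst hz
      have hy : y ∉ E := fun hy => hcon y hy hR
      simp [idE, hy, obotl]
    · simp [idE, hz, obotr]
  · rintro x y ⟨u, hu, hR⟩
    have h := congrFun (hunit (idE ({y} : Set X) e)).2 x
    have hle : e ≤ conv R o (idE E e) (idE ({y} : Set X) e) x := by
      have : e = o (idE E e u) (idE ({y} : Set X) e y) := by
        simp [idE, hu, hel]
      exact this.le.trans (le_iSup_of_le u (le_iSup_of_le y (le_iSup_of_le hR le_rfl)))
    rw [h] at hle
    by_contra hxy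
    simp only [idE, Set.mem_singleton_iff, hxy, if_false] at hle
    exact hne (le_bot_iff.1 hle)
  · intro x
    have h := congrFun (hunit (idE ({x} : Set X) e)).1 x
    have hx : conv R o (idE ({x} : Set X) e) (idE E e) x = e := by
      rw [h]; simp [idE]
    by_contra hcon
    push_neg at hcon
    apply hne
    rw [← hx]
    unfold conv
    simp only [iSup_eq_bot]
    intro y z hR
    by_cases hy : y = x
    · subst hy
      have hz : z ∉ E := fun hz => hcon z hz hR
      simp [idE, hz, obotr]
    · simp [idE, hy, obotl]
  · rintro x y ⟨u, hu, hR⟩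
    have h := congrFun (hunit (idE ({y} : Set X) e)).1 x
    have hle : e ≤ conv R o (idE ({y} : Set X) e) (idE E e) x := by
      have : e = o (idE ({y} : Set X) e y) (idE E e u) := by
        simp [idE, hu, her]
      exact this.le.trans (le_iSup_of_le y (le_iSup_of_le u (le_iSup_of_le hR le_rfl)))
    rw [h] at hle
    by_contra hxy
    simp only [idE, Set.mem_singleton_iff, hxy, if_false] at hle
    exact hne (le_bot_iff.1 hle)
end

section
/- Let X be a set with ternary relation R and Q a prequantale. If R is relationally associative, i.e. (∃ y, R y u v ∧ R x y w) ↔ (∃ y, R x u y ∧ R y v w), and • is associative in Q, then convolution ∗ is associative on Q^X. -/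
theorem stmt15 {X Q : Type*} [CompleteLattice Q] (R : X → X → X → Prop)
    (o : Q → Q → Q)
    (hl : ∀ (s : Set Q) (b : Q), o (sSup s) b = ⨆ a ∈ s, o a b)
    (hr : ∀ (a : Q) (s : Set Q), o a (sSup s) = ⨆ b ∈ s, o a b)
    (hrassoc : ∀ x u v w, (∃ y, R y u v ∧ R x y w) ↔ (∃ y, R x u y ∧ R y v w))
    (hassoc : ∀ a b c, o (o a b) c = o a (o b c)) :
    ∀ f g h : X → Q, conv R o (conv R o f g) h = conv R o f (conv R o g h) := by
  have olX : ∀ (F : X → Q) (b : Q), o (⨆ i, F i) b = ⨆ i, o (F i) b := by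
    intro F b; rw [iSup, hl, iSup_range]
  have olP : ∀ (p : Prop) (F : p → Q) (b : Q), o (⨆ i, F i) b = ⨆ i, o (F i) b := by
    intro p F b; rw [iSup, hl, iSup_range]
  have orX : ∀ (a : Q) (F : X → Q), o a (⨆ i, F i) = ⨆ i, o a (F i) := by
    intro a F; rw [iSup, hr, iSup_range]
  have orP : ∀ (a : Q) (p : Prop) (F : p → Q), o a (⨆ i, F i) = ⨆ i, o a (F i) := by
    intro a p F; rw [iSup, hr, iSup_range]
  intro f g h
  funext x
  simp only [conv]
  apply le_antisymm
  · refine iSup_le fun y => iSup_le fun z => iSup_le fun hxyz => ?_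
    rw [olX]
    refine iSup_le fun u => ?_
    rw [olX]
    refine iSup_le fun v => ?_
    rw [olP]
    refine iSup_le fun hyuv => ?_
    obtain ⟨w, hw1, hw2⟩ := (hrassoc x u v z).mp ⟨y, hyuv, hxyz⟩
    rw [hassoc]
    refine le_iSup_of_le u <| le_iSup_of_le w <| le_iSup_of_le hw1 ?_
    rw [orX]
    refine le_iSup_of_le v ?_
    rw [orX]
    refine le_iSup_of_le z ?_
    rw [orP]
    exact le_iSup_of_le hw2 le_rfl
  · refine iSup_le fun y => iSup_le fun z => iSup_le fun hxyz => ?_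
    rw [orX]
    refine iSup_le fun u => ?_
    rw [orX]
    refine iSup_le fun v => ?_
    rw [orP]
    refine iSup_le fun huv => ?_
    obtain ⟨w, hw1, hw2⟩ := (hrassoc x y u v).mpr ⟨z, hxyz, huv⟩
    rw [← hassoc]
    refine le_iSup_of_le w <| le_iSup_of_le v <| le_iSup_of_le hw2 ?_
    rw [olX]
    refine le_iSup_of_le y ?_
    rw [olX]
    refine le_iSup_of_le u ?_
    rw [olP]
    exact le_iSup_of_le hw1 le_rfl
end

section
/- Let X be a set with ternary relation R and Q a prequantale with some a, b ∈ Q satisfying a • b ≠ 0. If convolution on Q^X is commutative, then R is relationally commutative: R x u v implies R x v u. -/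
theorem stmt16 {X Q : Type*} [CompleteLattice Q] (R : X → X → X → Prop)
    (o : Q → Q → Q)
    (hl : ∀ (s : Set Q) (b : Q), o (sSup s) b = ⨆ a ∈ s, o a b)
    (hr : ∀ (a : Q) (s : Set Q), o a (sSup s) = ⨆ b ∈ s, o a b)
    (hnd : ∃ a b : Q, o a b ≠ ⊥)
    (hcomm : ∀ f g : X → Q, conv R o f g = conv R o g f) :
    ∀ x u v, R x u v → R x v u := by
  obtain ⟨a, b, hab⟩ := hnd
  have hbotl : ∀ c : Q, o ⊥ c = ⊥ := by
    intro c
    have := hl ∅ c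
    simpa using this
  have hbotr : ∀ c : Q, o c ⊥ = ⊥ := by
    intro c
    have := hr c ∅
    simpa using this
  intro x u v hxuv
  classical
  set f : X → Q := fun y => if y = u then a else ⊥ with hf
  set g : X → Q := fun y => if y = v then b else ⊥ with hg
  have h1 : conv R o f g x ≠ ⊥ := by
    intro h
    apply hab
    have hle : o (f u) (g v) ≤ conv R o f g x := by
      apply le_iSup_of_le u
      apply le_iSup_of_le v
      exact le_iSup_of_le hxuv le_rfl
    rw [h] at hle
    have : o (f u) (g v) = o a b := by simp [hf, hg]
    rw [this] at hle
    exact le_bot_iff.mp hle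
  rw [hcomm f g] at h1
  by_contra hnot
  apply h1
  rw [conv]
  apply le_bot_iff.mp
  apply iSup_le; intro y
  apply iSup_le; intro z
  apply iSup_le; intro hR
  by_cases hy : y = v
  · by_cases hz : z = u
    · subst hy; subst hz; exact absurd hR hnot
    · have : f z = ⊥ := by simp [hf, hz]
      rw [this, hbotr]
  · have : g y = ⊥ := by simp [hg, hy]
    rw [this, hbotl]
end

section
/- Let (X, R, {e}) be a graded, finitely decomposable relational monoid with single unit e, and K a Kleene algebra. Define the star of f : X → K recursively by f⋆ e = (f e)⋆ and f⋆ x = (f e)⋆ • Σ {f y • f⋆ z | R x y z ∧ y ≠ e} for x ≠ e. Then the star unfold law id_e + f ∗ f⋆ = f⋆ holds in K^X, where ∗ is convolution and id_e is the function equal to 1 at e and 0 elsewhere. -/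
open scoped Classical

/-- Relational convolution as a finite sum, for a finitely decomposable ternary
relation `R` over a semiring of weights. -/
noncomputable def rconv {X K : Type*} [Semiring K] (R : X → X → X → Prop)
    (hfin : ∀ x, {p : X × X | R x p.1 p.2}.Finite) (f g : X → K) (x : X) : K :=
  ∑ p ∈ (hfin x).toFinset, f p.1 * g p.2

private lemma key_unfold {K : Type*} [KleeneAlgebra K] (a : K) :
    1 + a * KStar.kstar a = KStar.kstar a := by
  apply le_antisymm
  · rw [add_eq_sup]
    exact sup_le one_le_kstar mul_kstar_le_kstar
  · apply kstar_le_of_mul_le_right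
    · rw [add_eq_sup]; exact le_sup_left
    · calc a * (1 + a * KStar.kstar a)
          = a * 1 + a * (a * KStar.kstar a) := mul_add _ _ _
        _ ≤ a * KStar.kstar a + a * KStar.kstar a := by
            apply add_le_add
            · exact mul_le_mul_right one_le_kstar a
            · exact mul_le_mul_right mul_kstar_le_kstar a
        _ = a * KStar.kstar a := by rw [add_eq_sup, sup_idem]
        _ ≤ 1 + a * KStar.kstar a := by rw [add_eq_sup]; exact le_sup_right

theorem stmt19 {X K : Type*} [KleeneAlgebra K] (R : X → X → X → Prop) (e : X)
    (hfin : ∀ x, {p : X × X | R x p.1 p.2}.Finite)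
    (hrassoc : ∀ x u v w, (∃ y, R y u v ∧ R x y w) ↔ (∃ y, R x u y ∧ R y v w))
    (hu1 : ∀ x, R x e x) (hu2 : ∀ x y, R x e y → x = y)
    (hu3 : ∀ x, R x x e) (hu4 : ∀ x y, R x y e → x = y)
    (grade : X → ℕ)
    (hg1 : ∀ x, x ≠ e → 0 < grade x)
    (hg2 : ∀ x y z, R x y z → grade x = grade y + grade z)
    (f fstar : X → K)
    (hse : fstar e = KStar.kstar (f e))
    (hsx : ∀ x, x ≠ e → fstar x =
      KStar.kstar (f e) *
        ∑ p ∈ (hfin x).toFinset.filter (fun p => p.1 ≠ e), f p.1 * fstar p.2) :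
    ∀ x, (if x = e then (1 : K) else 0) + rconv R hfin f fstar x = fstar x := by
  have hge : grade e = 0 := by
    have := hg2 e e e (hu1 e)
    omega
  have hzero : ∀ y, grade y = 0 → y = e := by
    intro y hy
    by_contra h
    exact absurd hy (hg1 y h).ne'
  intro x
  by_cases hx : x = e
  · rw [hx]
    have hset : (hfin e).toFinset = {(e, e)} := by
      ext p
      simp only [Set.Finite.mem_toFinset, Set.mem_setOf_eq, Finset.mem_singleton]
      constructor
      · intro hp
        have := hg2 e p.1 p.2 hp
        rw [hge] at this
        have h1 : p.1 = e := hzero _ (by omega)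
        have h2 : p.2 = e := hzero _ (by omega)
        exact Prod.ext h1 h2
      · rintro rfl
        exact hu1 e
    simp only [if_pos rfl, rconv, hset, Finset.sum_singleton, hse]
    exact key_unfold (f e)
  · rw [if_neg hx, zero_add, rconv]
    rw [← Finset.sum_filter_add_sum_filter_not ((hfin x).toFinset)
      (fun p => p.1 = e)]
    have h1 : ((hfin x).toFinset.filter (fun p => p.1 = e)) = {(e, x)} := by
      ext p
      simp only [Finset.mem_filter, Set.Finite.mem_toFinset, Set.mem_setOf_eq,
        Finset.mem_singleton]
      constructor
      · rintro ⟨hp, h1⟩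
        obtain ⟨y, z⟩ := p
        simp only at h1
        subst h1
        exact Prod.ext rfl (hu2 x z hp).symm
      · rintro rfl
        exact ⟨hu1 x, rfl⟩
    have h2 : ((hfin x).toFinset.filter (fun p => ¬ p.1 = e)) =
        ((hfin x).toFinset.filter (fun p => p.1 ≠ e)) := rfl
    rw [h1, h2, Finset.sum_singleton]
    set S := ∑ p ∈ (hfin x).toFinset.filter (fun p => p.1 ≠ e), f p.1 * fstar p.2
    rw [hsx x hx, ← mul_assoc]
    calc f e * KStar.kstar (f e) * S + S
        = (1 + f e * KStar.kstar (f e)) * S := by rw [add_mul, one_mul, add_comm]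
      _ = KStar.kstar (f e) * S := by rw [key_unfold]
end
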